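/- Let a, ε, β, R be positive reals with ε/(2β) < 1, and let x₀, x be points with ρ(x) sufficiently large, where ρ measures distance to x₀. Suppose every pair of points y, y' with ρ(y) ≥ R and ρ(y) < (ε/(2β))·ρ(y') satisfies d_B(y,y') ≥ √2/2 for a distance function d_B. Then d_B(x₀, x) ≥ c·log(1 + ρ(x)) for a constant c > 0 depending only on ε, β, R. -/

import Mathlib

/-!
Along a curve from `x₀` to `x`, the intermediate value theorem yields successive times at which
`ρ` takes the values `R, R r, R r², …, R rⁿ`, where `r = 4β/ε` and `R rⁿ ≤ ρ(x) < R rⁿ⁺¹`.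
Since `r · ε/(2β) = 2 > 1`, consecutive points of this chain are `d_B`-apart by at least `√2/2`,
so the `d_B`-length of the curve is at least `n·√2/2`, and `n ≳ log ρ(x)`.
-/

open Real Set

theorem exists_monotone_hitting_times {f : ℝ → ℝ} {a b : ℝ} (hab : a ≤ b)
    (hf : ContinuousOn f (Icc a b)) {v : ℕ → ℝ} (hv : Monotone v) (n : ℕ)
    (ha : f a ≤ v 0) (hb : v n ≤ f b) :
    ∃ u : ℕ → ℝ, Monotone u ∧ (∀ i, u i ∈ Icc a b) ∧ ∀ i ≤ n, f (u i) = v i := by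
  induction n with
  | zero =>
    obtain ⟨t, ht, hft⟩ := intermediate_value_Icc hab hf ⟨ha, hb⟩
    refine ⟨fun _ => t, monotone_const, fun _ => ht, fun i hi => ?_⟩
    rwa [Nat.le_zero.1 hi]
  | succ n ih =>
    obtain ⟨u, hu, hu_mem, hu_val⟩ := ih ((hv n.le_succ).trans hb)
    have hn_mem := hu_mem n
    obtain ⟨t, ht, hft⟩ := intermediate_value_Icc hn_mem.2
      (hf.mono (Icc_subset_Icc hn_mem.1 le_rfl)) ⟨(hu_val n le_rfl).trans_le (hv n.le_succ), hb⟩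
    refine ⟨fun i => if i ≤ n then u i else t, monotone_nat_of_le_succ fun i => ?_,
      fun i => ?_, fun i hi => ?_⟩
    · split_ifs with h₁ h₂
      · exact hu i.le_succ
      · obtain rfl : i = n := by omega
        exact ht.1
      · omega
      · exact le_rfl
    · dsimp only
      split_ifs
      · exact hu_mem i
      · exact ⟨hn_mem.1.trans ht.1, ht.2⟩
    · dsimp only
      split_ifs with h
      · exact hu_val i h
      · obtain rfl : i = n + 1 := by omega
        exact hft

theorem natCast_mul_le_of_forall_partition_sum_le {M : Type*} [TopologicalSpace M]
    {ρ : M → ℝ} (hρ : Continuous ρ) {dB : M → M → ℝ} {q R r κ L : ℝ} (hR : 0 < R)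
    (hr : 1 ≤ r) (hqr : 1 < q * r)
    (hpair : ∀ y y', R ≤ ρ y → ρ y < q * ρ y' → κ ≤ dB y y')
    {γ : ℝ → M} (hγ : ContinuousOn γ (Icc 0 1)) (hγ0 : ρ (γ 0) ≤ R)
    (hlen : ∀ (n : ℕ) (t : Fin (n + 1) → ℝ), Monotone t → (∀ i, t i ∈ Icc (0 : ℝ) 1) →
      ∑ i : Fin n, dB (γ (t i.castSucc)) (γ (t i.succ)) ≤ L)
    {n : ℕ} (hn : R * r ^ n ≤ ρ (γ 1)) :
    n * κ ≤ L := by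
  have hlevels : Monotone fun i : ℕ => R * r ^ i := fun i j hij =>
    mul_le_mul_of_nonneg_left (pow_le_pow_right₀ hr hij) hR.le
  obtain ⟨u, hu, hu_mem, hu_val⟩ := exists_monotone_hitting_times (f := fun t => ρ (γ t))
    zero_le_one (hρ.comp_continuousOn hγ) hlevels n (by simpa using hγ0) hn
  have hstep (i : Fin n) : κ ≤ dB (γ (u i.castSucc)) (γ (u i.succ)) := by
    simp only [Fin.val_castSucc, Fin.val_succ]
    apply hpair
    · rw [hu_val i i.is_lt.le]
      exact le_mul_of_one_le_right hR.le (one_le_pow₀ hr)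
    · rw [hu_val i i.is_lt.le, hu_val (i + 1) i.is_lt, pow_succ,
        show q * (R * (r ^ (i : ℕ) * r)) = q * r * (R * r ^ (i : ℕ)) by ring]
      exact lt_mul_of_one_lt_left (by positivity) hqr
  calc (n : ℝ) * κ = ∑ _i : Fin n, κ := by simp
    _ ≤ ∑ i : Fin n, dB (γ (u i.castSucc)) (γ (u i.succ)) :=
      Finset.sum_le_sum fun i _ => hstep i
    _ ≤ L := hlen n (fun i => u i) (fun _ _ hij => hu hij) fun i => hu_mem i

theorem log_one_add_le_two_mul_log_div {s a : ℝ} (ha : 0 < a) (hs1 : 1 ≤ s)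
    (hs : 2 * a ^ 2 ≤ s) : log (1 + s) ≤ 2 * log (s / a) := by
  have hsq : 1 + s ≤ (s / a) ^ 2 := by
    rw [div_pow, le_div_iff₀ (by positivity)]
    nlinarith
  calc log (1 + s) ≤ log ((s / a) ^ 2) := log_le_log (by linarith) hsq
    _ = 2 * log (s / a) := by rw [log_pow]; norm_num

theorem exists_pow_le_and_log_one_add_le {R r s : ℝ} (hR : 0 < R) (hr : 1 < r)
    (hs1 : 1 ≤ s) (hsR : R ≤ s) (hs : 2 * (R * r) ^ 2 ≤ s) :
    ∃ n : ℕ, R * r ^ n ≤ s ∧ log (1 + s) ≤ 2 * log r * n := by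
  obtain ⟨n, hn, hn'⟩ := exists_nat_pow_near ((one_le_div hR).2 hsR) hr
  refine ⟨n, (le_div_iff₀' hR).1 hn, ?_⟩
  have hlt : s / (R * r) < r ^ n := by
    rw [div_lt_iff₀ (by positivity)]
    rw [div_lt_iff₀ hR, pow_succ] at hn'
    linarith
  calc log (1 + s) ≤ 2 * log (s / (R * r)) :=
        log_one_add_le_two_mul_log_div (by positivity) hs1 hs
    _ ≤ 2 * log (r ^ n) := by gcongr
    _ = 2 * log r * n := by rw [log_pow]; ring

theorem chaining_log_lower_bound_general
    {M : Type*} [TopologicalSpace M] (ρ : M → ℝ) (hρcont : Continuous ρ)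
    (x₀ : M) (hρ0 : ρ x₀ = 0)
    (dB : M → M → ℝ)
    (ε β R : ℝ) (hε : 0 < ε) (hβ : 0 < β) (hR : 0 < R) (hq : ε / (2 * β) < 1)
    (hpair : ∀ y y' : M, R ≤ ρ y → ρ y < ε / (2 * β) * ρ y' →
      Real.sqrt 2 / 2 ≤ dB y y')
    (hlength : ∀ x : M, ∀ δ : ℝ, 0 < δ → ∃ γ : ℝ → M,
      ContinuousOn γ (Set.Icc (0 : ℝ) 1) ∧ γ 0 = x₀ ∧ γ 1 = x ∧
      ∀ (n : ℕ) (t : Fin (n + 1) → ℝ), Monotone t →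
        (∀ i, t i ∈ Set.Icc (0 : ℝ) 1) →
        ∑ i : Fin n, dB (γ (t i.castSucc)) (γ (t i.succ)) ≤ dB x₀ x + δ) :
    ∃ c : ℝ, 0 < c ∧ ∃ T : ℝ, ∀ x : M, T ≤ ρ x →
      c * Real.log (1 + ρ x) ≤ dB x₀ x := by
  set q := ε / (2 * β)
  have hq0 : 0 < q := by positivity
  have hr : 1 < 2 / q := by rw [lt_div_iff₀ hq0]; linarith
  have hqr : 1 < q * (2 / q) := by rw [mul_div_cancel₀ _ hq0.ne']; norm_num
  have hchain (x : M) (n : ℕ) (hn : R * (2 / q) ^ n ≤ ρ x) : n * (√2 / 2) ≤ dB x₀ x :=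
    le_of_forall_pos_le_add fun δ hδ => by
      obtain ⟨γ, hγ, hγ0, hγ1, hlen⟩ := hlength x δ hδ
      exact natCast_mul_le_of_forall_partition_sum_le hρcont hR hr.le hqr hpair hγ
        (by rw [hγ0, hρ0]; exact hR.le) hlen (by rwa [hγ1])
  refine ⟨√2 / 2 / (2 * log (2 / q)), by have := log_pos hr; positivity,
    max (max 1 R) (2 * (R * (2 / q)) ^ 2), fun x hx => ?_⟩
  simp only [max_le_iff] at hx
  obtain ⟨n, hn, hlog⟩ := exists_pow_le_and_log_one_add_le hR hr hx.1.1 hx.1.2 hx.2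
  have hlogr := log_pos hr
  calc √2 / 2 / (2 * log (2 / q)) * log (1 + ρ x)
      ≤ √2 / 2 / (2 * log (2 / q)) * (2 * log (2 / q) * n) := by gcongr
    _ = n * (√2 / 2) := by field_simp
    _ ≤ dB x₀ x := hchain x n hn

/-- Abstract chaining lemma.  Let `ρ` be the (continuous) distance to a base point `x₀`
on a path-connected space `M`, and let `d_B` be a distance function on `M` which is a
length metric: every pair `x₀, x` is joined by continuous curves whose `d_B`-length
(supremum over partitions of sums of consecutive distances) approximates `d_B(x₀,x)`.
Suppose `ε, β, R > 0` with `ε/(2β) < 1`, and every pair `y, y'` with `ρ(y) ≥ R` and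
`ρ(y) < (ε/(2β))·ρ(y')` satisfies `d_B(y,y') ≥ √2/2`.  Then there are `c > 0` and a
threshold `T` (depending only on `ε, β, R`) with `d_B(x₀,x) ≥ c·log(1+ρ(x))` for all
`x` with `ρ(x) ≥ T`. -/
theorem chaining_log_lower_bound
    {M : Type*} [TopologicalSpace M] (ρ : M → ℝ) (hρcont : Continuous ρ)
    (hρnn : ∀ x, 0 ≤ ρ x) (x₀ : M) (hρ0 : ρ x₀ = 0)
    (dB : M → M → ℝ) (hdBnn : ∀ x y, 0 ≤ dB x y)
    (hdBsymm : ∀ x y, dB x y = dB y x)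
    (hdBtri : ∀ x y z, dB x z ≤ dB x y + dB y z)
    (ε β R : ℝ) (hε : 0 < ε) (hβ : 0 < β) (hR : 0 < R) (hq : ε / (2 * β) < 1)
    (hpair : ∀ y y' : M, R ≤ ρ y → ρ y < ε / (2 * β) * ρ y' →
      Real.sqrt 2 / 2 ≤ dB y y')
    (hlength : ∀ x : M, ∀ δ : ℝ, 0 < δ → ∃ γ : ℝ → M,
      ContinuousOn γ (Set.Icc (0 : ℝ) 1) ∧ γ 0 = x₀ ∧ γ 1 = x ∧
      ∀ (n : ℕ) (t : Fin (n + 1) → ℝ), Monotone t →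
        (∀ i, t i ∈ Set.Icc (0 : ℝ) 1) →
        ∑ i : Fin n, dB (γ (t i.castSucc)) (γ (t i.succ)) ≤ dB x₀ x + δ) :
    ∃ c : ℝ, 0 < c ∧ ∃ T : ℝ, ∀ x : M, T ≤ ρ x →
      c * Real.log (1 + ρ x) ≤ dB x₀ x :=
  chaining_log_lower_bound_general ρ hρcont x₀ hρ0 dB ε β R hε hβ hR hq hpair hlength
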